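/- arXiv:2007.04943 — 6 statements merged into one kernel-verified Lean document; each statement's English description precedes it below -/
import Mathlib

section
/- Let k be a field, N ≥ 3, and 1 ≤ i ≤ N−2. Suppose F1, F2, F3, F4, F5, F6 are complete flags in k^N such that consecutive flags (indices cyclic, F7 = F1) are in relative position alternately τ_i and τ_{i+1}: F1,F2 in position τ_i; F2,F3 in position τ_{i+1}; F3,F4 in position τ_i; F4,F5 in position τ_{i+1}; F5,F6 in position τ_i; F6,F1 in position τ_{i+1}. Then F5 and F6 are uniquely determined by F1 and F4: if F2', F3', F5', F6' are flags such that (F1, F2', F3', F4, F5', F6') also satisfies all six relative-position conditions, then F5' = F5 and F6' = F6. -/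
/-- A complete flag in `k^N`: a chain of subspaces `F 0 ⊆ F 1 ⊆ ⋯ ⊆ F N` with
`dim (F j) = j`. -/
structure CompleteFlag (k : Type*) [Field k] (N : ℕ) where
  F : Fin (N + 1) → Submodule k (Fin N → k)
  mono : Monotone F
  dim : ∀ j : Fin (N + 1), Module.finrank k (F j) = (j : ℕ)

/-- Two complete flags are in relative position `τ_i` (for `1 ≤ i ≤ N-1`) if they agree
in every degree `j ≠ i` and differ in degree `i`. -/
def RelPos {k : Type*} [Field k] {N : ℕ} (i : ℕ) (F G : CompleteFlag k N) : Prop :=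
  (∀ j : Fin (N + 1), (j : ℕ) ≠ i → F.F j = G.F j) ∧
  (∀ j : Fin (N + 1), (j : ℕ) = i → F.F j ≠ G.F j)

lemma CompleteFlag.ext' {k : Type*} [Field k] {N : ℕ} {F G : CompleteFlag k N}
    (h : F.F = G.F) : F = G := by
  cases F; cases G; cases h; rfl

/-- At a hexagonal vertex, with six flags whose consecutive relative positions alternate
between `τ_i` and `τ_{i+1}`, the flags `F5, F6` are uniquely determined by `F1, F4`. -/
theorem hexagonal_uniqueness (k : Type*) [Field k] (N i : ℕ) (hN : 3 ≤ N)
    (hi1 : 1 ≤ i) (hi2 : i ≤ N - 2)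
    (F1 F2 F3 F4 F5 F6 : CompleteFlag k N)
    (h12 : RelPos i F1 F2) (h23 : RelPos (i + 1) F2 F3) (h34 : RelPos i F3 F4)
    (h45 : RelPos (i + 1) F4 F5) (h56 : RelPos i F5 F6) (h61 : RelPos (i + 1) F6 F1)
    (F2' F3' F5' F6' : CompleteFlag k N)
    (h12' : RelPos i F1 F2') (h23' : RelPos (i + 1) F2' F3') (h34' : RelPos i F3' F4)
    (h45' : RelPos (i + 1) F4 F5') (h56' : RelPos i F5' F6') (h61' : RelPos (i + 1) F6' F1) :
    F5' = F5 ∧ F6' = F6 := by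
  have hiN : i + 2 ≤ N := by omega
  set ii : Fin (N + 1) := ⟨i, by omega⟩ with hii
  set jj : Fin (N + 1) := ⟨i + 1, by omega⟩ with hjj
  have hiv : (ii : ℕ) = i := rfl
  have hjv : (jj : ℕ) = i + 1 := rfl
  have hlejj : ii ≤ jj := by simp [Fin.le_def, hii, hjj]
  -- key: for any A B with RelPos (i+1) F4 A, RelPos i A B, RelPos (i+1) B F1,
  -- we have A.F jj = F1.F ii ⊔ F4.F ii
  have key : ∀ A B : CompleteFlag k N, RelPos (i + 1) F4 A → RelPos i A B →
      RelPos (i + 1) B F1 → A.F jj = F1.F ii ⊔ F4.F ii := by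
    intro A B hA hAB hB
    have e1 : F4.F ii = A.F ii := hA.1 ii (by omega)
    have e2 : B.F ii = F1.F ii := hB.1 ii (by omega)
    have e3 : A.F ii ≠ B.F ii := hAB.2 ii rfl
    have e4 : A.F jj = B.F jj := hAB.1 jj (by omega)
    have hne : F4.F ii ≠ F1.F ii := by rw [e1, ← e2]; exact e3
    have h1le : F1.F ii ≤ A.F jj := by rw [e4, ← e2]; exact B.mono hlejj
    have h4le : F4.F ii ≤ A.F jj := by rw [e1]; exact A.mono hlejj
    have hsub : F1.F ii ⊔ F4.F ii ≤ A.F jj := sup_le h1le h4le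
    have hlt : F1.F ii < F1.F ii ⊔ F4.F ii := by
      refine lt_of_le_of_ne le_sup_left ?_
      intro h
      have h4 : F4.F ii ≤ F1.F ii := by rw [h]; exact le_sup_right
      exact hne (Submodule.eq_of_le_of_finrank_eq h4 (by rw [F4.dim, F1.dim]))
    have hd1 : Module.finrank k (F1.F ii) < Module.finrank k ↥(F1.F ii ⊔ F4.F ii) :=
      Submodule.finrank_lt_finrank_of_lt hlt
    have hd2 : Module.finrank k ↥(F1.F ii ⊔ F4.F ii) ≤ Module.finrank k (A.F jj) :=
      Submodule.finrank_mono hsub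
    have hdim : Module.finrank k ↥(F1.F ii ⊔ F4.F ii) = Module.finrank k (A.F jj) := by
      have d1 : Module.finrank k (F1.F ii) = i := F1.dim ii
      have d2 : Module.finrank k (A.F jj) = i + 1 := A.dim jj
      omega
    exact (Submodule.eq_of_le_of_finrank_eq hsub hdim).symm
  have hF5 : F5'.F = F5.F := by
    funext j
    by_cases hj : (j : ℕ) = i + 1
    · have hjeq : j = jj := Fin.ext hj
      rw [hjeq, key F5' F6' h45' h56' h61', key F5 F6 h45 h56 h61]
    · rw [← h45'.1 j hj, ← h45.1 j hj]
  have hF6 : F6'.F = F6.F := by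
    funext j
    by_cases hj : (j : ℕ) = i
    · rw [h61'.1 j (by omega), ← h61.1 j (by omega)]
    · rw [← h56'.1 j hj, ← h56.1 j hj, hF5]
  exact ⟨CompleteFlag.ext' hF5, CompleteFlag.ext' hF6⟩
end

section
/- Let q be a prime power, N ≥ 2, and 1 ≤ i ≤ N−1. Let e_1, …, e_N denote the standard basis of 𝔽_q^N. Define three complete flags: S1 with S1^j = span(e_1, …, e_j); S2 with S2^j = S1^j for j ≠ i and S2^i = span(e_1, …, e_{i−1}, e_{i+1}); and S3 with S3^j = S1^j for j ≠ i and S3^i = span(e_1, …, e_{i−1}, e_i + e_{i+1}). Then the subgroup of GL_N(𝔽_q) consisting of all g that stabilize all three flags (i.e., g(Sm^j) = Sm^j for all m, j) has cardinality (q−1)^{N−1} · q^{N(N−1)/2 − 1}. -/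
open Submodule

/-- The `m`-th standard basis vector of `K^N` (1-based: `stdVec K N m = e_m` for
`1 ≤ m ≤ N`, and `0` otherwise). -/
def stdVec (K : Type*) [Field K] (N m : ℕ) : Fin N → K :=
  fun l => if (l : ℕ) + 1 = m then 1 else 0

/-- The standard flag: `S1 K N j = span(e_1, …, e_j)`. -/
def S1 (K : Type*) [Field K] (N j : ℕ) : Submodule K (Fin N → K) :=
  Submodule.span K {v | ∃ m, 1 ≤ m ∧ m ≤ j ∧ v = stdVec K N m}

/-- The flag `S2`, agreeing with `S1` in all degrees except degree `i`, where
`S2^i = span(e_1, …, e_{i-1}, e_{i+1})`. -/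
def S2 (K : Type*) [Field K] (N i j : ℕ) : Submodule K (Fin N → K) :=
  if j = i then
    Submodule.span K
      ({v | ∃ m, 1 ≤ m ∧ m ≤ i - 1 ∧ v = stdVec K N m} ∪ {stdVec K N (i + 1)})
  else S1 K N j

/-- The flag `S3`, agreeing with `S1` in all degrees except degree `i`, where
`S3^i = span(e_1, …, e_{i-1}, e_i + e_{i+1})`. -/
def S3 (K : Type*) [Field K] (N i j : ℕ) : Submodule K (Fin N → K) :=
  if j = i then
    Submodule.span K
      ({v | ∃ m, 1 ≤ m ∧ m ≤ i - 1 ∧ v = stdVec K N m} ∪ {stdVec K N i + stdVec K N (i + 1)})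
  else S1 K N j

/-! Stabilizing the standard flag `S1` means being upper triangular in the standard basis. For such
a matrix, `S2^i = ⟨e_{i+1}⟩ ⊔ S1^{i-1}` and `S3^i = ⟨e_i + e_{i+1}⟩ ⊔ S1^{i-1}` are stable exactly
when the `(i, i+1)` entry vanishes and the `i`-th and `(i+1)`-th diagonal entries agree. An
invertible matrix of this shape is a diagonal in `(𝔽_q^×)^N` with two equal coordinates, together
with free strictly upper entries away from `(i, i+1)`. -/

lemma Module.End.span_singleton_sup_mem_invtSubmodule_iff {R M : Type*} [Semiring R]
    [AddCommMonoid M] [Module R M] {f : Module.End R M} {p : Submodule R M}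
    (hp : p ∈ f.invtSubmodule) (w : M) :
    (R ∙ w) ⊔ p ∈ f.invtSubmodule ↔ f w ∈ (R ∙ w) ⊔ p := by
  rw [Module.End.mem_invtSubmodule, sup_le_iff, span_singleton_le_iff_mem, mem_comap]
  exact and_iff_left (hp.trans (comap_mono le_sup_right))

lemma LinearEquiv.map_eq_self_iff_mem_invtSubmodule {K V : Type*} [DivisionRing K] [AddCommGroup V]
    [Module K V] [FiniteDimensional K V] (g : V ≃ₗ[K] V) (p : Submodule K V) :
    p.map g.toLinearMap = p ↔ p ∈ Module.End.invtSubmodule g.toLinearMap := by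
  rw [Module.End.mem_invtSubmodule_iff_map_le]
  exact ⟨le_of_eq, fun h => eq_of_le_of_finrank_eq h (LinearEquiv.finrank_map_eq g p)⟩

section Flags

open Module.End

variable {K : Type*} [Field K] {N : ℕ}

lemma stdVec_succ (l : Fin N) : stdVec K N (l + 1) = Pi.single l 1 := by
  ext k
  simp [stdVec, Pi.single_apply, Fin.ext_iff]

lemma mem_S1_iff {j : ℕ} {v : Fin N → K} : v ∈ S1 K N j ↔ ∀ l : Fin N, j ≤ l → v l = 0 := by
  refine ⟨fun hv => ?_, fun hv => ?_⟩
  · have hle : S1 K N j ≤ Submodule.pi {l : Fin N | j ≤ l} fun _ => ⊥ := by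
      refine span_le.2 ?_
      rintro _ ⟨m, -, hmj, rfl⟩ l (hl : j ≤ l)
      exact (mem_bot K).2 (if_neg (by omega))
    simpa [mem_pi] using hle hv
  · rw [pi_eq_sum_univ v]
    refine sum_mem fun l _ => ?_
    by_cases hl : j ≤ l
    · simp [hv l hl]
    · refine smul_mem _ _ (subset_span ⟨l + 1, by omega, by omega, ?_⟩)
      rw [stdVec_succ]
      ext k
      simp [Pi.single_apply, eq_comm]

lemma S1_mono {j j' : ℕ} (h : j ≤ j') : S1 K N j ≤ S1 K N j' := fun _ hv =>
  mem_S1_iff.2 fun l hl => mem_S1_iff.1 hv l (h.trans hl)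

lemma single_mem_S1 (l : Fin N) : Pi.single l (1 : K) ∈ S1 K N (l + 1) := by
  rw [← stdVec_succ]
  exact subset_span ⟨l + 1, by omega, le_rfl, rfl⟩

-- `a` and `b` are the 0-based coordinates of `e_i` and `e_{i+1}`, where `i = b`.
variable {a b : Fin N}

lemma S2_self (hab : (b : ℕ) = a + 1) : S2 K N b b = (K ∙ Pi.single b 1) ⊔ S1 K N a := by
  rw [S2, if_pos rfl, Set.union_singleton, span_insert, stdVec_succ,
    show (b : ℕ) - 1 = a by omega]
  rfl

lemma S3_self (hab : (b : ℕ) = a + 1) :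
    S3 K N b b = (K ∙ (Pi.single a 1 + Pi.single b 1)) ⊔ S1 K N a := by
  have hb : stdVec K N b = Pi.single a 1 := by rw [hab, stdVec_succ]
  rw [S3, if_pos rfl, Set.union_singleton, span_insert, stdVec_succ, hb,
    show (b : ℕ) - 1 = a by omega]
  rfl

lemma mem_span_singleton_sup_S1_iff (hab : (b : ℕ) = a + 1) {w : Fin N → K}
    (hw : w ∈ S1 K N (b + 1)) (hwb : w b = 1) {v : Fin N → K} :
    v ∈ (K ∙ w) ⊔ S1 K N a ↔ v ∈ S1 K N (b + 1) ∧ v a = w a * v b := by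
  rw [mem_S1_iff] at hw
  simp only [mem_sup, mem_span_singleton, mem_S1_iff]
  constructor
  · rintro ⟨_, ⟨c, rfl⟩, z, hz, rfl⟩
    refine ⟨fun l hl => ?_, ?_⟩
    · simp [hw l hl, hz l (by omega)]
    · simp [hz a le_rfl, hz b (by omega), hwb, mul_comm]
  · rintro ⟨hv, hva⟩
    refine ⟨_, ⟨v b, rfl⟩, v - v b • w, fun l hl => ?_, add_sub_cancel _ _⟩
    obtain rfl | rfl | hl : l = a ∨ l = b ∨ (b : ℕ) + 1 ≤ l := by
      simp only [Fin.ext_iff]; omega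
    · simp [hva, mul_comm]
    · simp [hwb]
    · simp [hv l hl, hw l hl]

lemma span_singleton_sup_S1_mem_invtSubmodule_iff (hab : (b : ℕ) = a + 1)
    {f : Module.End K (Fin N → K)} (hf : ∀ j, S1 K N j ∈ invtSubmodule f) {w : Fin N → K}
    (hw : w ∈ S1 K N (b + 1)) (hwb : w b = 1) :
    (K ∙ w) ⊔ S1 K N a ∈ invtSubmodule f ↔ f w a = w a * f w b := by
  rw [span_singleton_sup_mem_invtSubmodule_iff (hf a),
    mem_span_singleton_sup_S1_iff hab hw hwb]
  exact and_iff_right (hf _ hw)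

lemma forall_S1_mem_invtSubmodule_iff (A : Matrix (Fin N) (Fin N) K) :
    (∀ j, S1 K N j ∈ invtSubmodule A.mulVecLin) ↔ A.IsUpperTriangular := by
  simp only [mem_invtSubmodule_iff_forall_mem_of_mem, Matrix.mulVecLin_apply,
    mem_S1_iff]
  refine ⟨fun h k l hlk => ?_, fun hA j v hv k hk => ?_⟩
  · simpa using h (l + 1) _ (mem_S1_iff.1 (single_mem_S1 (K := K) l)) k hlk
  · change ∑ l, A k l * v l = 0
    refine Finset.sum_eq_zero fun l _ => ?_
    rcases lt_or_ge l k with hlk | hkl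
    · simp [hA hlk]
    · simp [hv l (hk.trans hkl)]

lemma forall_flags_mem_invtSubmodule_iff (f : Module.End K (Fin N → K)) (i : ℕ) :
    (∀ j, S1 K N j ∈ invtSubmodule f ∧ S2 K N i j ∈ invtSubmodule f ∧
        S3 K N i j ∈ invtSubmodule f) ↔
      (∀ j, S1 K N j ∈ invtSubmodule f) ∧ S2 K N i i ∈ invtSubmodule f ∧
        S3 K N i i ∈ invtSubmodule f := by
  refine ⟨fun h => ⟨fun j => (h j).1, (h i).2⟩, fun ⟨h1, h23⟩ j => ?_⟩
  by_cases hj : j = i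
  · subst hj; exact ⟨h1 _, h23⟩
  · simp only [S2, S3, if_neg hj]; exact ⟨h1 j, h1 j, h1 j⟩

theorem flags_mem_invtSubmodule_iff (hab : (b : ℕ) = a + 1) (A : Matrix (Fin N) (Fin N) K) :
    (∀ j, S1 K N j ∈ invtSubmodule A.mulVecLin ∧ S2 K N b j ∈ invtSubmodule A.mulVecLin ∧
        S3 K N b j ∈ invtSubmodule A.mulVecLin) ↔
      A.IsUpperTriangular ∧ A a b = 0 ∧ A a a = A b b := by
  rw [forall_flags_mem_invtSubmodule_iff, forall_S1_mem_invtSubmodule_iff]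
  refine and_congr_right fun hA => ?_
  have hf := (forall_S1_mem_invtSubmodule_iff A).2 hA
  have hlt : a < b := by rw [Fin.lt_def]; omega
  have hw : Pi.single a 1 + Pi.single b 1 ∈ S1 K N (b + 1) :=
    add_mem (S1_mono (by omega) (single_mem_S1 a)) (single_mem_S1 b)
  rw [S2_self hab, S3_self hab,
    span_singleton_sup_S1_mem_invtSubmodule_iff hab hf (single_mem_S1 b) (by simp),
    span_singleton_sup_S1_mem_invtSubmodule_iff hab hf hw (by simp [hlt.ne])]
  simp +contextual [Matrix.mulVec_add, hA hlt, hlt.ne]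

end Flags

section Counting

variable {α β : Type*} [DecidableEq α]

def restrictComplEquiv (x : α) (F : ({y // y ≠ x} → β) → β) :
    {f : α → β // f x = F fun y => f y} ≃ ({y // y ≠ x} → β) where
  toFun f y := f.1 y
  invFun g := ⟨fun y => if h : y = x then F g else g ⟨y, h⟩, by
    simp only [dite_true]
    congr 1
    ext y
    simp [y.2]⟩
  left_inv f := by
    ext y
    by_cases h : y = x
    · subst h; simp [f.2]
    · simp [h]
  right_inv g := by ext y; simp [y.2]

lemma card_subtype_apply_eq_restrict [Fintype α] (x : α) (F : ({y // y ≠ x} → β) → β) :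
    Nat.card {f : α → β // f x = F fun y => f y} = Nat.card β ^ (Fintype.card α - 1) := by
  rw [Nat.card_congr (restrictComplEquiv x F), Nat.card_fun,
    Nat.card_eq_fintype_card (α := {y // y ≠ x})]
  simp [Fintype.card_subtype_compl]

end Counting

section Triangular

variable {ι R : Type*} [Fintype ι] [LinearOrder ι] [CommRing R]

lemma Matrix.IsUpperTriangular.isUnit_iff {A : Matrix ι ι R} (hA : A.IsUpperTriangular) :
    IsUnit A ↔ ∀ k, IsUnit (A k k) := by
  rw [Matrix.isUnit_iff_isUnit_det, Matrix.det_of_isUpperTriangular hA, IsUnit.prod_univ_iff]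

noncomputable def upperTriangularUnitsEquiv (a b : ι) (hab : a < b) :
    {A : Matrix.GeneralLinearGroup ι R //
        (A : Matrix ι ι R).IsUpperTriangular ∧ (A : Matrix ι ι R) a b = 0 ∧ A a a = A b b} ≃
      {d : ι → Rˣ // d a = d b} × {U : {p : ι × ι // p.1 < p.2} → R // U ⟨(a, b), hab⟩ = 0} where
  toFun A := (⟨fun k => (A.2.1.isUnit_iff.1 A.1.isUnit k).unit, Units.ext A.2.2.2⟩,
    ⟨fun p => A.1 p.1.1 p.1.2, A.2.2.1⟩)
  invFun dU :=
    let M : Matrix ι ι R := Matrix.of fun k l =>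
      if k = l then (dU.1.1 k : R) else if h : k < l then dU.2.1 ⟨(k, l), h⟩ else 0
    have hM : M.IsUpperTriangular := fun k l (hlk : l < k) => by simp [M, hlk.ne', hlk.not_gt]
    ⟨(hM.isUnit_iff.2 fun k => by simp [M]).unit, hM, by simp [M, hab, hab.ne, dU.2.2],
      by simp [M, dU.1.2]⟩
  left_inv A := by
    ext k l
    rcases lt_trichotomy k l with hkl | rfl | hkl
    · simp [hkl, hkl.ne]
    · simp
    · simp [hkl.ne', hkl.not_gt, A.2.1 hkl]
  right_inv dU := by
    refine Prod.ext (by ext; simp) ?_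
    ext ⟨⟨k, l⟩, hkl : k < l⟩
    simp [hkl.ne, hkl]

end Triangular

theorem card_units_isUpperTriangular_apply_eq_zero_diag_eq {ι K : Type*} [Fintype ι]
    [LinearOrder ι] [Field K] {a b : ι} (hab : a < b) :
    Nat.card {A : Matrix.GeneralLinearGroup ι K //
        (A : Matrix ι ι K).IsUpperTriangular ∧ (A : Matrix ι ι K) a b = 0 ∧ A a a = A b b} =
      (Nat.card K - 1) ^ (Fintype.card ι - 1) * Nat.card K ^ ((Fintype.card ι).choose 2 - 1) := by
  have hdiag : Nat.card {d : ι → Kˣ // d a = d b} = (Nat.card K - 1) ^ (Fintype.card ι - 1) := by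
    rw [← Nat.card_units]
    exact card_subtype_apply_eq_restrict a fun d => d ⟨b, hab.ne'⟩
  have hupper : Nat.card {U : {p : ι × ι // p.1 < p.2} → K // U ⟨(a, b), hab⟩ = 0} =
      Nat.card K ^ ((Fintype.card ι).choose 2 - 1) := by
    rw [← Fintype.card_product_filter_lt, ← Fintype.card_subtype]
    exact card_subtype_apply_eq_restrict _ fun _ => 0
  rw [Nat.card_congr (upperTriangularUnitsEquiv a b hab), Nat.card_prod, hdiag, hupper]

theorem card_stabilizer_three_flags_general (K : Type*) [Field K] [Fintype K] (q N i : ℕ)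
    (hq : Fintype.card K = q) (hi1 : 1 ≤ i) (hi2 : i ≤ N - 1) :
    Nat.card {g : (Fin N → K) ≃ₗ[K] (Fin N → K) //
        ∀ j : ℕ,
          Submodule.map g.toLinearMap (S1 K N j) = S1 K N j ∧
          Submodule.map g.toLinearMap (S2 K N i j) = S2 K N i j ∧
          Submodule.map g.toLinearMap (S3 K N i j) = S3 K N i j} =
      (q - 1) ^ (N - 1) * q ^ (N * (N - 1) / 2 - 1) := by
  subst hq
  obtain ⟨b, rfl⟩ : ∃ b : Fin N, (b : ℕ) = i := ⟨⟨i, by omega⟩, rfl⟩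
  set a : Fin N := ⟨b - 1, by omega⟩
  have hab : (b : ℕ) = a + 1 := by simp only [a]; omega
  let e := (Matrix.GeneralLinearGroup.toLin.trans
    (LinearMap.GeneralLinearGroup.generalLinearEquiv K (Fin N → K))).toEquiv
  calc
    _ = Nat.card {A : Matrix.GeneralLinearGroup (Fin N) K //
          (A : Matrix (Fin N) (Fin N) K).IsUpperTriangular ∧
            (A : Matrix (Fin N) (Fin N) K) a b = 0 ∧ A a a = A b b} :=
      Nat.card_congr (e.subtypeEquiv fun A => by
        simp only [LinearEquiv.map_eq_self_iff_mem_invtSubmodule]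
        exact (flags_mem_invtSubmodule_iff hab _).symm).symm
    _ = _ := by
      rw [card_units_isUpperTriangular_apply_eq_zero_diag_eq (by rw [Fin.lt_def]; omega),
        Nat.card_eq_fintype_card, Fintype.card_fin, Nat.choose_two_right]

/-- The subgroup of `GL_N(𝔽_q)` stabilizing the three flags `S1, S2, S3` has cardinality
`(q-1)^{N-1} · q^{N(N-1)/2 - 1}`. -/
theorem card_stabilizer_three_flags (K : Type*) [Field K] [Fintype K] (q N i : ℕ)
    (hq : Fintype.card K = q) (hN : 2 ≤ N) (hi1 : 1 ≤ i) (hi2 : i ≤ N - 1) :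
    Nat.card {g : (Fin N → K) ≃ₗ[K] (Fin N → K) //
        ∀ j : ℕ,
          Submodule.map g.toLinearMap (S1 K N j) = S1 K N j ∧
          Submodule.map g.toLinearMap (S2 K N i j) = S2 K N i j ∧
          Submodule.map g.toLinearMap (S3 K N i j) = S3 K N i j} =
      (q - 1) ^ (N - 1) * q ^ (N * (N - 1) / 2 - 1) :=
  card_stabilizer_three_flags_general K q N i hq hi1 hi2
end

section
/- Let k be a field and let x, z ∈ k with x ≠ 0, x ≠ −1, z ≠ 0. In k^3, set a = span(e_1), A = ker(0,0,1), b = span(e_3), B = ker(1,0,0), c = span((1,−1,1)), C = ker(1,1+x,x), and B' = ker(z,1,0). Then: (1) the line A ∩ C is spanned by (1+x, −1, 0); (2) the plane spanned by b and A ∩ C equals ker(1, 1+x, 0); (3) the four planes B, span(b, A∩C), span(a,b), B' all contain the line b, and the cross-ratio of the corresponding covectors (1,0,0), (1,1+x,0), (0,1,0), (z,1,0) — computed in the 2-dimensional space of covectors vanishing on b, with the convention ⟨α1,α2,α3,α4⟩ = (α1∧α2)(α3∧α4) / ((α2∧α3)(α4∧α1)) where (p,q,0)∧(r,s,0) :=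 ps − qr — equals z(1+x). -/
open Submodule LinearMap

/-- The covector `(p, q, r)` on `k^3`. -/
noncomputable def cov {k : Type*} [Field k] (p q r : k) : (Fin 3 → k) →ₗ[k] k :=
  p • (LinearMap.proj 0 : (Fin 3 → k) →ₗ[k] k) +
  q • (LinearMap.proj 1 : (Fin 3 → k) →ₗ[k] k) +
  r • (LinearMap.proj 2 : (Fin 3 → k) →ₗ[k] k)

/-- The wedge `(p,q,0) ∧ (r,s,0) = ps − qr` of two covectors vanishing on `b = ⟨e₃⟩`. -/
def wedge2 {k : Type*} [Field k] (p q r s : k) : k := p * s - q * r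

/-!
A plane through `b = ⟨e₃⟩` is the kernel of a covector `(p, q, 0)` and is spanned by `b` and
`(q, −p, 0)`. Since that second vector lies in `A = ker(0,0,1)` while `b ∩ A = 0`, the modular law
cuts the plane down to the line `⟨(q, −p, 0)⟩`; and on `A` the covector `(p, q, r)` agrees with
`(p, q, 0)`, so `A ∩ ker(p, q, r)` is that line. The cross-ratio is a product of `2 × 2`
determinants.
-/

section
variable {k : Type*} [Field k]

@[simp]
lemma cov_apply (p q r : k) (v : Fin 3 → k) : cov p q r v = p * v 0 + q * v 1 + r * v 2 := by
  simp [cov]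

lemma span_e3_le_ker_cov (p q : k) : span k {![0, 0, 1]} ≤ ker (cov p q 0) := by
  simp [span_singleton_le_iff_mem]

lemma span_e3_sup_span_eq_ker_cov {p q : k} (hpq : p ≠ 0 ∨ q ≠ 0) :
    span k {![0, 0, 1]} ⊔ span k {![q, -p, 0]} = ker (cov p q 0) := by
  refine le_antisymm (sup_le (span_e3_le_ker_cov p q) ?_) fun v hv => ?_
  · simp [span_singleton_le_iff_mem]
    ring
  simp only [mem_ker, cov_apply, zero_mul, add_zero] at hv
  rw [← span_union, Set.singleton_union, mem_span_pair]
  rcases hpq with hp | hq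
  · refine ⟨v 2, -v 1 / p, funext fun i => ?_⟩
    fin_cases i <;> simp [field]
    linear_combination -hv
  · refine ⟨v 2, v 0 / q, funext fun i => ?_⟩
    fin_cases i <;> simp [field]
    linear_combination -hv

lemma ker_cov_e3_inf_ker_cov_eq_span {p q : k} (hpq : p ≠ 0 ∨ q ≠ 0) (r : k) :
    ker (cov (0 : k) 0 1) ⊓ ker (cov p q r) = span k {![q, -p, 0]} := by
  have hA : ker (cov (0 : k) 0 1) ⊓ ker (cov p q r) = ker (cov (0 : k) 0 1) ⊓ ker (cov p q 0) := by
    ext v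
    simp only [mem_inf, mem_ker, cov_apply]
    constructor <;> rintro ⟨h2, h⟩ <;> simp_all
  have hline : span k {![q, -p, 0]} ≤ ker (cov (0 : k) 0 1) := by
    simp [span_singleton_le_iff_mem]
  have hb : ker (cov (0 : k) 0 1) ⊓ span k {![0, 0, 1]} = ⊥ := by
    rw [← disjoint_iff, disjoint_span_singleton' (by simp)]
    simp
  rw [hA, ← span_e3_sup_span_eq_ker_cov hpq, ← inf_sup_assoc_of_le _ hline, hb, bot_sup_eq]

end

theorem mutation_cross_ratio_general (k : Type*) [Field k] (x z : k) :
    -- (1) the line A ∩ C is spanned by (1+x, −1, 0)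
    (ker (cov (0:k) 0 1) ⊓ ker (cov (1:k) (1+x) x)
      = span k {(![1+x, -1, 0] : Fin 3 → k)}) ∧
    -- (2) the plane spanned by b and A ∩ C equals ker(1, 1+x, 0)
    (span k {(![0,0,1] : Fin 3 → k)} ⊔ (ker (cov (0:k) 0 1) ⊓ ker (cov (1:k) (1+x) x))
      = ker (cov (1:k) (1+x) 0)) ∧
    -- span(a, b) = ker(0,1,0)
    (span k {(![1,0,0] : Fin 3 → k)} ⊔ span k {(![0,0,1] : Fin 3 → k)}
      = ker (cov (0:k) 1 0)) ∧
    -- (3) the four planes all contain the line b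
    (span k {(![0,0,1] : Fin 3 → k)} ≤ ker (cov (1:k) 0 0) ∧
     span k {(![0,0,1] : Fin 3 → k)} ≤ ker (cov (1:k) (1+x) 0) ∧
     span k {(![0,0,1] : Fin 3 → k)} ≤ ker (cov (0:k) 1 0) ∧
     span k {(![0,0,1] : Fin 3 → k)} ≤ ker (cov z 1 0)) ∧
    -- and the cross-ratio ⟨(1,0), (1,1+x), (0,1), (z,1)⟩ equals z(1+x)
    (wedge2 (1:k) 0 1 (1+x) * wedge2 (0:k) 1 z 1
        / (wedge2 (1:k) (1+x) 0 1 * wedge2 z 1 1 0) = z * (1+x)) := by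
  have hAC := ker_cov_e3_inf_ker_cov_eq_span (q := 1 + x) (.inl one_ne_zero) x
  refine ⟨hAC, ?_, ?_, ⟨span_e3_le_ker_cov _ _, span_e3_le_ker_cov _ _, span_e3_le_ker_cov _ _,
    span_e3_le_ker_cov _ _⟩, ?_⟩
  · rw [hAC]
    exact span_e3_sup_span_eq_ker_cov (.inl one_ne_zero)
  · rw [sup_comm]
    simpa using span_e3_sup_span_eq_ker_cov (k := k) (p := 0) (.inr one_ne_zero)
  · simp only [wedge2]
    ring

/-- The cluster X-transformation computation for a Legendrian mutation at a Y-cycle: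
with `a = ⟨e₁⟩`, `A = ker(0,0,1)`, `b = ⟨e₃⟩`, `B = ker(1,0,0)`, `c = ⟨(1,−1,1)⟩`,
`C = ker(1,1+x,x)`, `B' = ker(z,1,0)`, the line `A ∩ C` is spanned by `(1+x,−1,0)`,
the plane spanned by `b` and `A ∩ C` is `ker(1,1+x,0)`, the four planes
`B`, `span(b, A∩C)`, `span(a,b)`, `B'` all contain `b`, and the cross-ratio of the
corresponding covectors equals `z(1+x)`. -/
theorem mutation_cross_ratio (k : Type*) [Field k] (x z : k)
    (hx0 : x ≠ 0) (hx1 : x ≠ -1) (hz : z ≠ 0) :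
    -- (1) the line A ∩ C is spanned by (1+x, −1, 0)
    (ker (cov (0:k) 0 1) ⊓ ker (cov (1:k) (1+x) x)
      = span k {(![1+x, -1, 0] : Fin 3 → k)}) ∧
    -- (2) the plane spanned by b and A ∩ C equals ker(1, 1+x, 0)
    (span k {(![0,0,1] : Fin 3 → k)} ⊔ (ker (cov (0:k) 0 1) ⊓ ker (cov (1:k) (1+x) x))
      = ker (cov (1:k) (1+x) 0)) ∧
    -- span(a, b) = ker(0,1,0)
    (span k {(![1,0,0] : Fin 3 → k)} ⊔ span k {(![0,0,1] : Fin 3 → k)}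
      = ker (cov (0:k) 1 0)) ∧
    -- (3) the four planes all contain the line b
    (span k {(![0,0,1] : Fin 3 → k)} ≤ ker (cov (1:k) 0 0) ∧
     span k {(![0,0,1] : Fin 3 → k)} ≤ ker (cov (1:k) (1+x) 0) ∧
     span k {(![0,0,1] : Fin 3 → k)} ≤ ker (cov (0:k) 1 0) ∧
     span k {(![0,0,1] : Fin 3 → k)} ≤ ker (cov z 1 0)) ∧
    -- and the cross-ratio ⟨(1,0), (1,1+x), (0,1), (z,1)⟩ equals z(1+x)
    (wedge2 (1:k) 0 1 (1+x) * wedge2 (0:k) 1 z 1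
        / (wedge2 (1:k) (1+x) 0 1 * wedge2 z 1 1 0) = z * (1+x)) :=
  mutation_cross_ratio_general k x z
end

section
/- Let k be a field and let 𝒜 = (a, A), ℬ = (b, B), 𝒞 = (c, C) be flags in k^3 (each a line contained in a plane). Assume ℬ is completely transverse to 𝒜 and ℬ is completely transverse to 𝒞, and assume A ∩ B ⊆ C and c ⊆ a + b (the span of the lines a and b). Then either 𝒜 = 𝒞, or 𝒜 and 𝒞 are completely transverse. -/
open Submodule

/-- Two flags `(ℓ1, P1)`, `(ℓ2, P2)` in `k^3` are completely transverse. -/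
def TransvFlag3 {k : Type*} [Field k] (ℓ₁ P₁ ℓ₂ P₂ : Submodule k (Fin 3 → k)) : Prop :=
  ℓ₁ ≠ ℓ₂ ∧ P₁ ≠ P₂ ∧ ¬ ℓ₁ ≤ P₂ ∧ ¬ ℓ₂ ≤ P₁

section Aux
variable {k : Type*} [Field k]

private lemma line_eq_of_le {x y : Submodule k (Fin 3 → k)} (hx : Module.finrank k x = 1)
    (hy : Module.finrank k y = 1) (h : x ≤ y) : x = y :=
  Submodule.eq_of_le_of_finrank_eq h (hx.trans hy.symm)

private lemma sup_lines {x y : Submodule k (Fin 3 → k)} (hx : Module.finrank k x = 1)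
    (hy : Module.finrank k y = 1) (hne : x ≠ y) : Module.finrank k ↥(x ⊔ y) = 2 := by
  have h0 : Module.finrank k ↥(x ⊓ y) = 0 := by
    by_contra h
    have hle : Module.finrank k ↥(x ⊓ y) ≤ 1 := hx ▸ Submodule.finrank_mono inf_le_left
    have h1 : Module.finrank k ↥(x ⊓ y) = 1 := by omega
    exact hne (((line_eq_of_le h1 hx inf_le_left).symm).trans
      (line_eq_of_le h1 hy inf_le_right))
  have := Submodule.finrank_sup_add_finrank_inf_eq x y
  omega

private lemma inf_planes {P Q : Submodule k (Fin 3 → k)} (hP : Module.finrank k P = 2)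
    (hQ : Module.finrank k Q = 2) (hne : P ≠ Q) : Module.finrank k ↥(P ⊓ Q) = 1 := by
  have hsup : Module.finrank k ↥(P ⊔ Q) = 3 := by
    have h1 : Module.finrank k ↥(P ⊔ Q) ≤ 3 := by
      have := Submodule.finrank_le (P ⊔ Q)
      simpa using this
    have h2 : 2 ≤ Module.finrank k ↥(P ⊔ Q) := hP ▸ Submodule.finrank_mono le_sup_left
    by_contra h
    have h3 : Module.finrank k ↥(P ⊔ Q) = 2 := by omega
    have hPe : P = P ⊔ Q :=
      Submodule.eq_of_le_of_finrank_eq le_sup_left (hP.trans h3.symm)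
    have hQP : Q ≤ P := le_trans le_sup_right hPe.ge
    exact hne (Submodule.eq_of_le_of_finrank_eq hQP (hQ.trans hP.symm)).symm
  have := Submodule.finrank_sup_add_finrank_inf_eq P Q
  omega

end Aux

/-- The dichotomy along a hexagonal edge of a 3-graph: if `ℬ = (b,B)` is completely
transverse to both `𝒜 = (a,A)` and `𝒞 = (c,C)`, with `A ∩ B ⊆ C` and `c ⊆ a + b`,
then either `𝒜 = 𝒞` or `𝒜` and `𝒞` are completely transverse. -/
theorem hexagonal_edge_dichotomy (k : Type*) [Field k]
    (a A b B c C : Submodule k (Fin 3 → k))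
    (ha : Module.finrank k a = 1) (hA : Module.finrank k A = 2) (haA : a ≤ A)
    (hb : Module.finrank k b = 1) (hB : Module.finrank k B = 2) (hbB : b ≤ B)
    (hc : Module.finrank k c = 1) (hC : Module.finrank k C = 2) (hcC : c ≤ C)
    (hBA : TransvFlag3 b B a A) (hBC : TransvFlag3 b B c C)
    (hABC : A ⊓ B ≤ C) (hcab : c ≤ a ⊔ b) :
    (a = c ∧ A = C) ∨ TransvFlag3 a A c C := by
  obtain ⟨hba, hBAne, hbA, haB⟩ := hBA
  obtain ⟨hbc, hBCne, hbC, hcB⟩ := hBC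
  -- d = A ⊓ B is a line contained in C, distinct from a
  have hd : Module.finrank k ↥(A ⊓ B) = 1 := inf_planes hA hB (Ne.symm hBAne)
  have had : a ≠ A ⊓ B := fun h => haB (h ▸ inf_le_right)
  -- if a ≤ C then A = C:
  have key : a ≤ C → A = C := by
    intro haC
    have hsup2 : Module.finrank k ↥(a ⊔ A ⊓ B) = 2 := sup_lines ha hd had
    have h1 : a ⊔ A ⊓ B = A :=
      Submodule.eq_of_le_of_finrank_eq (sup_le haA inf_le_left) (hsup2.trans hA.symm)
    have h2 : a ⊔ A ⊓ B = C :=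
      Submodule.eq_of_le_of_finrank_eq (sup_le haC hABC) (hsup2.trans hC.symm)
    exact h1 ▸ h2
  by_cases hac : a = c
  · left
    exact ⟨hac, key (hac ▸ hcC)⟩
  · right
    -- c ≤ A is impossible
    have hcA : ¬ c ≤ A := by
      intro hcA
      have hab : a ≠ b := fun h => haB (h ▸ hbB)
      have habA : a ⊔ b ≠ A := fun h => hbA (h ▸ le_sup_right)
      have hE : Module.finrank k ↥((a ⊔ b) ⊓ A) = 1 := inf_planes (sup_lines ha hb hab) hA habA
      have haE : a = (a ⊔ b) ⊓ A := line_eq_of_le ha hE (le_inf le_sup_left haA)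
      have hcE : c = (a ⊔ b) ⊓ A := line_eq_of_le hc hE (le_inf hcab hcA)
      exact hac (haE.trans hcE.symm)
    have haC : ¬ a ≤ C := fun h => hcA ((key h) ▸ hcC)
    exact ⟨hac, fun h => haC (h ▸ haA), haC, hcA⟩
end

section
/- Let q be a prime power and let 𝒜 = (a, A) and 𝒞 = (c, C) be a fixed pair of completely transverse flags in 𝔽_q^3. Then the number of flags ℬ = (b, B) in 𝔽_q^3 that are completely transverse to both 𝒜 and 𝒞 and satisfy A ∩ B ⊆ C and c ⊆ a + b equals q − 1. -/
open Submodule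

section Aux

variable {K : Type*} [Field K]

private lemma line_inf_bot {x y : Submodule K (Fin 3 → K)}
    (hx : Module.finrank K x = 1) (hy : Module.finrank K y = 1) (hxy : x ≠ y) :
    x ⊓ y = ⊥ := by
  by_contra h
  have h1 : Module.finrank K ↥(x ⊓ y) ≠ 0 := by
    rwa [ne_eq, Submodule.finrank_eq_zero]
  have h2 : Module.finrank K ↥(x ⊓ y) ≤ 1 := hx ▸ Submodule.finrank_mono inf_le_left
  have h3 : Module.finrank K ↥(x ⊓ y) = 1 := le_antisymm h2 (Nat.one_le_iff_ne_zero.mpr h1)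
  have hxx : x ⊓ y = x := Submodule.eq_of_le_of_finrank_le inf_le_left (by rw [hx, h3])
  have hyy : x ⊓ y = y := Submodule.eq_of_le_of_finrank_le inf_le_right (by rw [hy, h3])
  exact hxy (hxx.symm.trans hyy)

private lemma line_sup_finrank {x y : Submodule K (Fin 3 → K)}
    (hx : Module.finrank K x = 1) (hy : Module.finrank K y = 1) (hxy : x ≠ y) :
    Module.finrank K ↥(x ⊔ y) = 2 := by
  have h := Submodule.finrank_sup_add_finrank_inf_eq x y
  rw [line_inf_bot hx hy hxy, finrank_bot, hx, hy] at h
  omega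

private lemma plane_inf_finrank {P Q : Submodule K (Fin 3 → K)}
    (hP : Module.finrank K P = 2) (hQ : Module.finrank K Q = 2) (hPQ : P ≠ Q) :
    Module.finrank K ↥(P ⊓ Q) = 1 := by
  have h := Submodule.finrank_sup_add_finrank_inf_eq P Q
  have hle : Module.finrank K ↥(P ⊔ Q) ≤ 3 := by
    have := Submodule.finrank_le (P ⊔ Q)
    rwa [Module.finrank_fin_fun] at this
  have hinf_le : Module.finrank K ↥(P ⊓ Q) ≤ 2 := hP ▸ Submodule.finrank_mono inf_le_left
  have h2 : Module.finrank K ↥(P ⊓ Q) ≠ 2 := by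
    intro heq
    have hPP : P ⊓ Q = P := Submodule.eq_of_le_of_finrank_le inf_le_left (by rw [hP, heq])
    have hQQ : P ⊓ Q = Q := Submodule.eq_of_le_of_finrank_le inf_le_right (by rw [hQ, heq])
    exact hPQ (hPP.symm.trans hQQ)
  omega

end Aux

/-- Given a pair of completely transverse flags `𝒜 = (a,A)`, `𝒞 = (c,C)` in `𝔽_q^3`,
the number of flags `ℬ = (b,B)` completely transverse to both, with `A ∩ B ⊆ C` and
`c ⊆ a + b`, equals `q − 1`. -/
theorem card_middle_flags_hexagonal_edge (K : Type*) [Field K] [Fintype K] (q : ℕ)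
    (hq : Fintype.card K = q)
    (a A c C : Submodule K (Fin 3 → K))
    (ha : Module.finrank K a = 1) (hA : Module.finrank K A = 2) (haA : a ≤ A)
    (hc : Module.finrank K c = 1) (hC : Module.finrank K C = 2) (hcC : c ≤ C)
    (hAC : TransvFlag3 a A c C) :
    Nat.card {p : Submodule K (Fin 3 → K) × Submodule K (Fin 3 → K) //
        Module.finrank K p.1 = 1 ∧ Module.finrank K p.2 = 2 ∧ p.1 ≤ p.2 ∧
        TransvFlag3 p.1 p.2 a A ∧ TransvFlag3 p.1 p.2 c C ∧
        A ⊓ p.2 ≤ C ∧ c ≤ a ⊔ p.1} = q - 1 := by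
  classical
  obtain ⟨hac, hACne, haC, hcA⟩ := hAC
  have hW : Module.finrank K ↥(a ⊔ c) = 2 := line_sup_finrank ha hc hac
  have haW : a ≤ a ⊔ c := le_sup_left
  have hcW : c ≤ a ⊔ c := le_sup_right
  have he : Module.finrank K ↥(A ⊓ C) = 1 := plane_inf_finrank hA hC hACne
  have heA : A ⊓ C ≤ A := inf_le_left
  have heC : A ⊓ C ≤ C := inf_le_right
  have hAWne : A ≠ a ⊔ c := fun h => hcA (h ▸ hcW)
  have hCWne : C ≠ a ⊔ c := fun h => haC (h ▸ haW)
  have hAWa : A ⊓ (a ⊔ c) = a := by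
    have h1 : Module.finrank K ↥(A ⊓ (a ⊔ c)) = 1 := plane_inf_finrank hA hW hAWne
    exact (Submodule.eq_of_le_of_finrank_le (le_inf haA haW) (by rw [h1, ha])).symm
  have hCWc : C ⊓ (a ⊔ c) = c := by
    have h1 : Module.finrank K ↥(C ⊓ (a ⊔ c)) = 1 := plane_inf_finrank hC hW hCWne
    exact (Submodule.eq_of_le_of_finrank_le (le_inf hcC hcW) (by rw [h1, hc])).symm
  -- choose spanning vectors of a and c
  have ha_ne_bot : a ≠ ⊥ := by intro h; rw [h, finrank_bot] at ha; exact one_ne_zero ha.symm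
  have hc_ne_bot : c ≠ ⊥ := by intro h; rw [h, finrank_bot] at hc; exact one_ne_zero hc.symm
  obtain ⟨u, hua, hu0⟩ := Submodule.exists_mem_ne_zero_of_ne_bot ha_ne_bot
  obtain ⟨w, hwc, hw0⟩ := Submodule.exists_mem_ne_zero_of_ne_bot hc_ne_bot
  have hau : a = span K {u} :=
    (Submodule.eq_of_le_of_finrank_le ((Submodule.span_singleton_le_iff_mem u a).mpr hua)
      (by rw [ha, finrank_span_singleton hu0])).symm
  have hcu : c = span K {w} :=
    (Submodule.eq_of_le_of_finrank_le ((Submodule.span_singleton_le_iff_mem w c).mpr hwc)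
      (by rw [hc, finrank_span_singleton hw0])).symm
  have hca : c ⊓ a = ⊥ := line_inf_bot hc ha (Ne.symm hac)
  -- the forward construction
  have hforward : ∀ b : Submodule K (Fin 3 → K), Module.finrank K ↥b = 1 → b ≤ a ⊔ c →
      b ≠ a → b ≠ c →
      (Module.finrank K ↥b = 1 ∧ Module.finrank K ↥(b ⊔ (A ⊓ C)) = 2 ∧ b ≤ b ⊔ (A ⊓ C) ∧
      TransvFlag3 b (b ⊔ (A ⊓ C)) a A ∧ TransvFlag3 b (b ⊔ (A ⊓ C)) c C ∧
      A ⊓ (b ⊔ (A ⊓ C)) ≤ C ∧ c ≤ a ⊔ b) := by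
    intro b hb1 hbW hba hbc
    have hbA : ¬ b ≤ A := by
      intro h
      have hle : b ≤ a := hAWa ▸ le_inf h hbW
      exact hba (Submodule.eq_of_le_of_finrank_le hle (by rw [ha, hb1]))
    have hbC : ¬ b ≤ C := by
      intro h
      have hle : b ≤ c := hCWc ▸ le_inf h hbW
      exact hbc (Submodule.eq_of_le_of_finrank_le hle (by rw [hc, hb1]))
    have hbe : b ≠ A ⊓ C := fun h => hbA (le_of_eq_of_le h heA)
    have hB2 : Module.finrank K ↥(b ⊔ (A ⊓ C)) = 2 := line_sup_finrank hb1 he hbe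
    have hab2 : Module.finrank K ↥(a ⊔ b) = 2 := line_sup_finrank ha hb1 (Ne.symm hba)
    have habW : a ⊔ b = a ⊔ c :=
      Submodule.eq_of_le_of_finrank_le (sup_le haW hbW) (by rw [hW, hab2])
    have hcab : c ≤ a ⊔ b := by rw [habW]; exact hcW
    have hBA : b ⊔ (A ⊓ C) ≠ A := fun h => hbA (h ▸ le_sup_left)
    have hBC : b ⊔ (A ⊓ C) ≠ C := fun h => hbC (h ▸ le_sup_left)
    have hce : c ≠ A ⊓ C := fun h => hcA (le_of_eq_of_le h heA)
    have hcB : ¬ c ≤ b ⊔ (A ⊓ C) := by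
      intro h
      have h2 : Module.finrank K ↥(c ⊔ (A ⊓ C)) = 2 := line_sup_finrank hc he hce
      have h3 : c ⊔ (A ⊓ C) = b ⊔ (A ⊓ C) :=
        Submodule.eq_of_le_of_finrank_le (sup_le h le_sup_right) (by rw [h2, hB2])
      have h4 : c ⊔ (A ⊓ C) = C :=
        Submodule.eq_of_le_of_finrank_le (sup_le hcC heC) (by rw [hC, h2])
      exact hbC (by rw [← h4, h3]; exact le_sup_left)
    have haB : ¬ a ≤ b ⊔ (A ⊓ C) := by
      intro h
      exact hcB (le_trans hcab (sup_le h le_sup_left))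
    have hinfB : A ⊓ (b ⊔ (A ⊓ C)) ≤ C := by
      have h1 : Module.finrank K ↥(A ⊓ (b ⊔ (A ⊓ C))) = 1 :=
        plane_inf_finrank hA hB2 (Ne.symm hBA)
      have h3 : A ⊓ C = A ⊓ (b ⊔ (A ⊓ C)) :=
        Submodule.eq_of_le_of_finrank_le (le_inf heA le_sup_right) (by rw [he, h1])
      rw [← h3]; exact heC
    exact ⟨hb1, hB2, le_sup_left, ⟨hba, hBA, hbA, haB⟩, ⟨hbc, hBC, hbC, hcB⟩, hinfB, hcab⟩
  -- properties of the candidate lines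
  have hv : ∀ t : K, w + t • u ≠ 0 := by
    intro t h
    have h1 : w ∈ a := by
      have hw' : w = (-t) • u := by
        rw [neg_smul]
        exact eq_neg_of_add_eq_zero_left h
      rw [hw']
      exact Submodule.smul_mem a _ hua
    have h2 : w ∈ c ⊓ a := ⟨hwc, h1⟩
    rw [hca, Submodule.mem_bot] at h2
    exact hw0 h2
  have hfW : ∀ t : K, span K {w + t • u} ≤ a ⊔ c := by
    intro t
    rw [Submodule.span_singleton_le_iff_mem]
    exact add_mem (hcW hwc) (Submodule.smul_mem _ _ (haW hua))
  have hf1 : ∀ t : K, Module.finrank K ↥(span K {w + t • u}) = 1 :=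
    fun t => finrank_span_singleton (hv t)
  have hfa : ∀ t : K, span K {w + t • u} ≠ a := by
    intro t h
    have h1 : w + t • u ∈ a := h ▸ Submodule.mem_span_singleton_self _
    have h2 : w ∈ a := by
      have := sub_mem h1 (Submodule.smul_mem a t hua)
      simpa using this
    have h3 : w ∈ c ⊓ a := ⟨hwc, h2⟩
    rw [hca, Submodule.mem_bot] at h3
    exact hw0 h3
  have hfc : ∀ t : K, t ≠ 0 → span K {w + t • u} ≠ c := by
    intro t ht h
    have h1 : w + t • u ∈ c := h ▸ Submodule.mem_span_singleton_self _
    have h2 : t • u ∈ c := by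
      have := sub_mem h1 hwc
      simpa using this
    have h3 : u ∈ c := by
      have := Submodule.smul_mem c t⁻¹ h2
      rwa [smul_smul, inv_mul_cancel₀ ht, one_smul] at this
    have h4 : u ∈ c ⊓ a := ⟨h3, hua⟩
    rw [hca, Submodule.mem_bot] at h4
    exact hu0 h4
  -- the bijection
  let g : Kˣ → {p : Submodule K (Fin 3 → K) × Submodule K (Fin 3 → K) //
      Module.finrank K p.1 = 1 ∧ Module.finrank K p.2 = 2 ∧ p.1 ≤ p.2 ∧
      TransvFlag3 p.1 p.2 a A ∧ TransvFlag3 p.1 p.2 c C ∧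
      A ⊓ p.2 ≤ C ∧ c ≤ a ⊔ p.1} :=
    fun t => ⟨(span K {w + (t : K) • u}, span K {w + (t : K) • u} ⊔ (A ⊓ C)),
      hforward _ (hf1 t) (hfW t) (hfa t) (hfc t t.ne_zero)⟩
  have hg : Function.Bijective g := by
    constructor
    · intro s t hst
      have h1 : span K {w + (s : K) • u} = span K {w + (t : K) • u} := by
        have := congrArg (fun p => p.1.1) hst
        simpa [g] using this
      have h2 : w + (s : K) • u ∈ span K {w + (t : K) • u} :=
        h1 ▸ Submodule.mem_span_singleton_self _
      obtain ⟨μ, hμ⟩ := Submodule.mem_span_singleton.mp h2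
      have h3 : (1 - μ) • w = (μ * (t : K) - (s : K)) • u := by
        have h2' : μ • w + (μ * (t : K)) • u = w + (s : K) • u := by
          rw [← hμ, smul_add, smul_smul]
        linear_combination (norm := module) - h2'
      have h4 : (1 - μ) • w ∈ c ⊓ a :=
        ⟨Submodule.smul_mem _ _ hwc, by rw [h3]; exact Submodule.smul_mem _ _ hua⟩
      rw [hca, Submodule.mem_bot] at h4
      have hμ1 : μ = 1 := by
        rcases smul_eq_zero.mp h4 with h | h
        · exact (sub_eq_zero.mp h).symm
        · exact absurd h hw0
      rw [hμ1, one_mul, sub_self, zero_smul] at h3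
      have h5 : ((t : K) - (s : K)) • u = 0 := h3.symm
      rcases smul_eq_zero.mp h5 with h | h
      · exact (Units.ext (sub_eq_zero.mp h)).symm
      · exact absurd h hu0
    · rintro ⟨⟨b, B⟩, hb1, hB2, hbB, ⟨hba, hBA, hbA, haB⟩, ⟨hbc, hBC, hbC, hcB⟩, hABC, hcab⟩
      have hab2 : Module.finrank K ↥(a ⊔ b) = 2 := line_sup_finrank ha hb1 (Ne.symm hba)
      have hWeq : a ⊔ c = a ⊔ b :=
        Submodule.eq_of_le_of_finrank_le (sup_le le_sup_left hcab) (by rw [hW, hab2])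
      have hbW : b ≤ a ⊔ c := by rw [hWeq]; exact le_sup_right
      have hb_ne_bot : b ≠ ⊥ := by
        intro h; rw [h, finrank_bot] at hb1; exact one_ne_zero hb1.symm
      obtain ⟨v, hvb, hv0⟩ := Submodule.exists_mem_ne_zero_of_ne_bot hb_ne_bot
      have hbv : b = span K {v} :=
        (Submodule.eq_of_le_of_finrank_le ((Submodule.span_singleton_le_iff_mem v b).mpr hvb)
          (by rw [hb1, finrank_span_singleton hv0])).symm
      have hvW : v ∈ a ⊔ c := hbW hvb
      obtain ⟨x, hx, y, hy, hxy⟩ := Submodule.mem_sup.mp hvW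
      rw [hau] at hx
      rw [hcu] at hy
      obtain ⟨α, rfl⟩ := Submodule.mem_span_singleton.mp hx
      obtain ⟨β, rfl⟩ := Submodule.mem_span_singleton.mp hy
      have hβ : β ≠ 0 := by
        intro h
        rw [h, zero_smul, add_zero] at hxy
        have hva : v ∈ a := by rw [← hxy]; exact Submodule.smul_mem a _ hua
        have hle : b ≤ a := by rw [hbv, Submodule.span_singleton_le_iff_mem]; exact hva
        exact hba (Submodule.eq_of_le_of_finrank_le hle (by rw [ha, hb1]))
      have ht : β⁻¹ * α ≠ 0 := by
        intro h
        rcases mul_eq_zero.mp h with h' | h'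
        · exact hβ (inv_eq_zero.mp h')
        · rw [h', zero_smul, zero_add] at hxy
          have hvc : v ∈ c := by rw [← hxy]; exact Submodule.smul_mem c _ hwc
          have hle : b ≤ c := by rw [hbv, Submodule.span_singleton_le_iff_mem]; exact hvc
          exact hbc (Submodule.eq_of_le_of_finrank_le hle (by rw [hc, hb1]))
      refine ⟨Units.mk0 (β⁻¹ * α) ht, ?_⟩
      have hspan : span K {w + (β⁻¹ * α) • u} = b := by
        have h1 : β • (w + (β⁻¹ * α) • u) = v := by
          rw [smul_add, smul_smul, ← mul_assoc, mul_inv_cancel₀ hβ, one_mul, ← hxy]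
          module
        rw [hbv, ← h1, Submodule.span_singleton_smul_eq (IsUnit.mk0 β hβ)]
      have hbe : b ≠ A ⊓ C := fun h => hbA (le_of_eq_of_le h heA)
      have hBeq : B = b ⊔ (A ⊓ C) := by
        have hABfr : Module.finrank K ↥(A ⊓ B) = 1 := plane_inf_finrank hA hB2 (Ne.symm hBA)
        have h3 : A ⊓ B = A ⊓ C :=
          Submodule.eq_of_le_of_finrank_le (le_inf inf_le_left hABC) (by rw [he, hABfr])
        have heB : A ⊓ C ≤ B := by rw [← h3]; exact inf_le_right
        exact (Submodule.eq_of_le_of_finrank_le (sup_le hbB heB)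
          (by rw [hB2, line_sup_finrank hb1 he hbe])).symm
      apply Subtype.ext
      show (span K {w + (β⁻¹ * α) • u}, span K {w + (β⁻¹ * α) • u} ⊔ (A ⊓ C)) = (b, B)
      rw [hspan, hBeq]
  have hcard := Nat.card_eq_of_bijective g hg
  rw [← hcard, Nat.card_eq_fintype_card, Fintype.card_units, hq]
end

section
/- Let k be a field, N ≥ 1, and let F and G be two complete flags in k^N. Then there exist a basis v_1, …, v_N of k^N and a permutation σ ∈ S_N such that F^i = span(v_1, …, v_i) and G^i = span(v_{σ(1)}, …, v_{σ(i)}) for all 0 ≤ i ≤ N. -/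
theorem Fin.exists_not_castSucc_and_succ {n : ℕ} {p : Fin (n + 1) → Prop} (h0 : ¬ p 0)
    (hlast : p (Fin.last n)) : ∃ i : Fin n, ¬ p i.castSucc ∧ p i.succ := by
  by_contra! h
  exact Fin.induction h0 h (Fin.last n) hlast

namespace CompleteFlag

open Module Submodule

variable {k : Type*} [Field k] {N : ℕ}

theorem F_zero (H : CompleteFlag k N) : H.F 0 = ⊥ :=
  finrank_eq_zero.mp (H.dim 0)

theorem F_last (H : CompleteFlag k N) : H.F (Fin.last N) = ⊤ :=
  eq_top_of_finrank_eq (by rw [H.dim, finrank_fin_fun, Fin.val_last])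

theorem F_succ_not_le_castSucc (H : CompleteFlag k N) (i : Fin N) :
    ¬ H.F i.succ ≤ H.F i.castSucc := fun h => by
  have hrank := finrank_mono h
  rw [H.dim, H.dim] at hrank
  simp at hrank

theorem span_singleton_sup_castSucc_eq_succ (H : CompleteFlag k N) {i : Fin N}
    {x : Fin N → k} (hx : x ∈ H.F i.succ) (hx' : x ∉ H.F i.castSucc) :
    span k {x} ⊔ H.F i.castSucc = H.F i.succ := by
  have hle : span k {x} ⊔ H.F i.castSucc ≤ H.F i.succ :=
    sup_le ((span_singleton_le_iff_mem _ _).mpr hx) (H.mono (Fin.castSucc_le_succ i))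
  have hlt : H.F i.castSucc < span k {x} ⊔ H.F i.castSucc :=
    lt_of_le_of_ne le_sup_right fun h =>
      hx' (h ▸ mem_sup_left (mem_span_singleton_self x))
  have hrank := finrank_lt_finrank_of_lt hlt
  rw [H.dim, Fin.val_castSucc] at hrank
  refine eq_of_le_of_finrank_le hle ?_
  rwa [H.dim, Fin.val_succ]

def Adapted (H : CompleteFlag k N) (w : Fin N → Fin N → k) : Prop :=
  ∀ j, w j ∈ H.F j.succ ∧ w j ∉ H.F j.castSucc

theorem Adapted.F_eq_span_image {H : CompleteFlag k N} {w : Fin N → Fin N → k}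
    (hw : H.Adapted w) (i : Fin (N + 1)) :
    H.F i = span k (w '' {j | (j : ℕ) < i}) := by
  induction i using Fin.induction with
  | zero => simp [F_zero]
  | succ i ih =>
    have : {j : Fin N | (j : ℕ) < i.succ} = insert i {j : Fin N | (j : ℕ) < i.castSucc} := by
      ext j; simp [le_iff_eq_or_lt, Fin.val_inj]
    rw [this, Set.image_insert_eq, span_insert, ← ih,
      H.span_singleton_sup_castSucc_eq_succ (hw i).1 (hw i).2]

theorem Adapted.span_range_eq_top {H : CompleteFlag k N} {w : Fin N → Fin N → k}
    (hw : H.Adapted w) : span k (Set.range w) = ⊤ := by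
  rw [← H.F_last, hw.F_eq_span_image]
  simp

theorem exists_relativePosition (F G : CompleteFlag k N) (i : Fin N) :
    ∃ j : Fin N, ∃ x, (x ∈ F.F i.succ ∧ x ∉ F.F i.castSucc) ∧
      (x ∈ G.F j.succ ∧ x ∉ G.F j.castSucc) ∧ F.F i.succ ⊓ G.F j.castSucc ≤ F.F i.castSucc := by
  obtain ⟨j, hjmin, hj⟩ := Fin.exists_not_castSucc_and_succ
    (p := fun j => ¬ F.F i.succ ⊓ G.F j ≤ F.F i.castSucc)
    (by simp [G.F_zero]) (by simpa [G.F_last] using F.F_succ_not_le_castSucc i)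
  rw [not_not] at hjmin
  obtain ⟨x, ⟨hxF, hxG⟩, hx⟩ := SetLike.not_le_iff_exists.mp hj
  exact ⟨j, x, ⟨hxF, hx⟩, ⟨hxG, fun h => hx (hjmin ⟨hxF, h⟩)⟩, hjmin⟩

theorem injective_of_relativePosition {F G : CompleteFlag k N} {v : Fin N → Fin N → k}
    {τ : Fin N → Fin N} (hF : F.Adapted v)
    (hG : ∀ i, v i ∈ G.F (τ i).succ ∧ v i ∉ G.F (τ i).castSucc)
    (hmin : ∀ i, F.F i.succ ⊓ G.F (τ i).castSucc ≤ F.F i.castSucc) :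
    Function.Injective τ := by
  refine .of_lt_imp_ne fun i₁ i₂ hlt hτ => ?_
  have hv₁ : span k {v i₁} ≤ F.F i₂.castSucc :=
    (span_singleton_le_iff_mem _ _).mpr (F.mono (Fin.succ_le_castSucc_iff.mpr hlt) (hF i₁).1)
  apply (hF i₂).2
  have : v i₂ ∈ (span k {v i₁} ⊔ G.F (τ i₂).castSucc) ⊓ F.F i₂.succ := by
    rw [← hτ, G.span_singleton_sup_castSucc_eq_succ (hG i₁).1 (hG i₁).2, hτ]
    exact ⟨(hG i₂).1, (hF i₂).1⟩
  rw [sup_inf_assoc_of_le _ (hv₁.trans (F.mono (Fin.castSucc_le_succ i₂))), inf_comm] at this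
  exact sup_le hv₁ (hmin i₂) this

end CompleteFlag

open CompleteFlag Module in
theorem common_adapted_basis_general (k : Type*) [Field k] (N : ℕ)
    (F G : CompleteFlag k N) :
    ∃ (v : Module.Basis (Fin N) k (Fin N → k)) (σ : Equiv.Perm (Fin N)),
      ∀ i : Fin (N + 1),
        F.F i = Submodule.span k ((fun j => v j) '' {j : Fin N | (j : ℕ) < (i : ℕ)}) ∧
        G.F i = Submodule.span k ((fun j => v (σ j)) '' {j : Fin N | (j : ℕ) < (i : ℕ)}) := by
  choose τ w hwF hwG hmin using exists_relativePosition F G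
  replace hwF : F.Adapted w := hwF
  have hτ : Function.Bijective τ :=
    Finite.injective_iff_bijective.mp (injective_of_relativePosition hwF hwG hmin)
  let σ := (Equiv.ofBijective τ hτ).symm
  have hwσ : G.Adapted (w ∘ σ) := fun j => by
    simpa [σ, Equiv.ofBijective_apply_symm_apply] using hwG (σ j)
  let v : Basis (Fin N) k (Fin N → k) := basisOfTopLeSpanOfCardEqFinrank w
    hwF.span_range_eq_top.ge (by simp)
  have hv : ⇑v = w := coe_basisOfTopLeSpanOfCardEqFinrank _ _ _
  exact ⟨v, σ, fun i => ⟨hv ▸ hwF.F_eq_span_image i, hv ▸ hwσ.F_eq_span_image i⟩⟩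

/-- Bruhat decomposition, linear-algebraic form: any two complete flags in `k^N` admit
a common adapted basis `v₁, …, v_N` and a permutation `σ` with
`F^i = span(v₁,…,v_i)` and `G^i = span(v_{σ(1)},…,v_{σ(i)})`. -/
theorem common_adapted_basis (k : Type*) [Field k] (N : ℕ) (hN : 1 ≤ N)
    (F G : CompleteFlag k N) :
    ∃ (v : Module.Basis (Fin N) k (Fin N → k)) (σ : Equiv.Perm (Fin N)),
      ∀ i : Fin (N + 1),
        F.F i = Submodule.span k ((fun j => v j) '' {j : Fin N | (j : ℕ) < (i : ℕ)}) ∧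
        G.F i = Submodule.span k ((fun j => v (σ j)) '' {j : Fin N | (j : ℕ) < (i : ℕ)}) :=
  common_adapted_basis_general k N F G
end
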